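/- arXiv:2009.11464 — 3 statements merged into one kernel-verified Lean document; each statement's English description precedes it below -/
import Mathlib

section
/- Let s and t be positive semi-definite symmetric bilinear forms on a finite-dimensional real vector space W, with signatures σ(s) = (0,b,c) and σ(t) = (0,c,b), and suppose rad(s) ∩ rad(t) = 0. Then the signature of t - s is (c,0,b). -/
/-!
By Cauchy–Schwarz, a semidefinite form `q` has `q v v = 0` only for `v` in its radical. Since the
radicals meet trivially, `t - s` is positive definite on `rad s` (dimension `b`) and negative
definite on `rad t` (dimension `c`). On the other hand `dim W ≤ b + c`, because `s` is positive
definite on a complement of `rad s`, while `s⁻ + s⁰ + s⁺ ≤ dim W` holds for every symmetric form.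
-/

open Module

/-- The maximal dimension of a subspace on which the symmetric bilinear form `b`
is negative definite. -/
noncomputable def negDim {W : Type*} [AddCommGroup W] [Module ℝ W]
    (b : LinearMap.BilinForm ℝ W) : ℕ :=
  sSup {d | ∃ U : Submodule ℝ W, finrank ℝ U = d ∧ ∀ x ∈ U, x ≠ 0 → b x x < 0}

/-- The maximal dimension of a subspace on which the symmetric bilinear form `b`
is positive definite. -/
noncomputable def posDim {W : Type*} [AddCommGroup W] [Module ℝ W]
    (b : LinearMap.BilinForm ℝ W) : ℕ :=
  sSup {d | ∃ U : Submodule ℝ W, finrank ℝ U = d ∧ ∀ x ∈ U, x ≠ 0 → 0 < b x x}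

/-- The signature `(s⁻, s⁰, s⁺)` of a symmetric bilinear form: the maximal dimension of a
negative definite subspace, the dimension of the radical, and the maximal dimension of a
positive definite subspace. -/
noncomputable def signature {W : Type*} [AddCommGroup W] [Module ℝ W]
    (b : LinearMap.BilinForm ℝ W) : ℕ × ℕ × ℕ :=
  (negDim b, finrank ℝ (LinearMap.ker b), posDim b)

open LinearMap (BilinForm)

section

variable {W : Type*} [AddCommGroup W] [Module ℝ W]

/-- Cauchy–Schwarz: if `q v v = 0`, the quadratic `r ↦ q (v + r w) (v + r w) = 2 r q v w + r² q w w`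
is nonnegative, so its discriminant `4 (q v w)²` vanishes. -/
lemma mem_ker_of_apply_self_eq_zero {q : BilinForm ℝ W} (hq : q.IsSymm) (hpsd : ∀ v, 0 ≤ q v v)
    {v : W} (hv : q v v = 0) : v ∈ LinearMap.ker q := by
  refine LinearMap.mem_ker.mpr (LinearMap.ext fun w => ?_)
  have hquad : ∀ r : ℝ, 0 ≤ q w w * (r * r) + 2 * q v w * r + 0 := fun r => by
    have h := hpsd (v + r • w)
    simp only [map_add, map_smul, LinearMap.add_apply, LinearMap.smul_apply, smul_eq_mul, hv,
      hq.eq w v] at h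
    linarith
  have hdisc := discrim_le_zero hquad
  rw [discrim] at hdisc
  simpa using (show q v w = 0 by nlinarith)

lemma apply_self_pos_of_notMem_ker {q : BilinForm ℝ W} (hq : q.IsSymm) (hpsd : ∀ v, 0 ≤ q v v)
    {v : W} (hv : v ∉ LinearMap.ker q) : 0 < q v v :=
  (hpsd v).lt_of_ne fun h => hv (mem_ker_of_apply_self_eq_zero hq hpsd h.symm)

lemma apply_add_self_of_mem_ker {q : BilinForm ℝ W} (hq : q.IsSymm) (v : W) {k : W}
    (hk : k ∈ LinearMap.ker q) : q (v + k) (v + k) = q v v := by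
  have hk' : q k = 0 := LinearMap.mem_ker.mp hk
  simp [hq.eq v k, hk']

lemma posDim_neg (q : BilinForm ℝ W) : posDim (-q) = negDim q := by
  simp only [posDim, negDim, LinearMap.neg_apply, Left.neg_pos_iff]

lemma disjoint_of_pos_of_nonpos {q : BilinForm ℝ W} {U V : Submodule ℝ W}
    (hU : ∀ x ∈ U, x ≠ 0 → 0 < q x x) (hV : ∀ x ∈ V, q x x ≤ 0) : Disjoint U V :=
  Submodule.disjoint_def.mpr fun x hxU hxV => by
    by_contra hx
    exact (hV x hxV).not_gt (hU x hxU hx)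

variable [FiniteDimensional ℝ W]

lemma bddAbove_setOf_finrank (P : Submodule ℝ W → Prop) :
    BddAbove {d | ∃ U : Submodule ℝ W, finrank ℝ U = d ∧ P U} :=
  ⟨finrank ℝ W, fun _ ⟨U, hU, _⟩ => hU ▸ U.finrank_le⟩

lemma le_posDim (q : BilinForm ℝ W) {U : Submodule ℝ W} (hU : ∀ x ∈ U, x ≠ 0 → 0 < q x x) :
    finrank ℝ U ≤ posDim q :=
  le_csSup (bddAbove_setOf_finrank _) ⟨U, rfl, hU⟩

lemma exists_finrank_eq_posDim (q : BilinForm ℝ W) :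
    ∃ U : Submodule ℝ W, finrank ℝ U = posDim q ∧ ∀ x ∈ U, x ≠ 0 → 0 < q x x := by
  have hmem :
      posDim q ∈ {d | ∃ U : Submodule ℝ W, finrank ℝ U = d ∧ ∀ x ∈ U, x ≠ 0 → 0 < q x x} :=
    Nat.sSup_mem ⟨0, ⊥, finrank_bot ℝ W, fun x hx hx0 => absurd ((Submodule.mem_bot ℝ).mp hx) hx0⟩
      (bddAbove_setOf_finrank _)
  exact hmem

/-- A positive definite subspace `U`, a negative definite subspace `V` and the radical `K` are
independent, since `q` is negative semidefinite on `V ⊔ K`. -/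
lemma negDim_add_finrank_ker_add_posDim_le {q : BilinForm ℝ W} (hq : q.IsSymm) :
    negDim q + finrank ℝ (LinearMap.ker q) + posDim q ≤ finrank ℝ W := by
  obtain ⟨U, hUdim, hU⟩ := exists_finrank_eq_posDim q
  obtain ⟨V, hVdim, hV⟩ := exists_finrank_eq_posDim (-q)
  rw [posDim_neg] at hVdim
  set K := LinearMap.ker q
  have hVK : Disjoint V K := disjoint_of_pos_of_nonpos hV fun x hx => by
    simp [LinearMap.mem_ker.mp hx]
  have hUVK : Disjoint U (V ⊔ K) := disjoint_of_pos_of_nonpos hU fun x hx => by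
    obtain ⟨v, hv, k, hk, rfl⟩ := Submodule.mem_sup.mp hx
    rw [apply_add_self_of_mem_ker hq v hk]
    rcases eq_or_ne v 0 with rfl | hv0
    · simp
    · simpa using (hV v hv hv0).le
  have hsup := Submodule.finrank_sup_add_finrank_inf_eq V K
  rw [hVK.eq_bot, finrank_bot] at hsup
  have := Submodule.finrank_add_finrank_le_of_disjoint hUVK
  omega

lemma finrank_le_finrank_ker_add_posDim {q : BilinForm ℝ W} (hq : q.IsSymm)
    (hpsd : ∀ v, 0 ≤ q v v) : finrank ℝ W ≤ finrank ℝ (LinearMap.ker q) + posDim q := by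
  obtain ⟨U, hU⟩ := Submodule.exists_isCompl (LinearMap.ker q)
  have hUpos : ∀ x ∈ U, x ≠ 0 → 0 < q x x := fun x hx hx0 =>
    apply_self_pos_of_notMem_ker hq hpsd fun hk =>
      hx0 (Submodule.disjoint_def.mp hU.disjoint x hk hx)
  have := le_posDim q hUpos
  have := Submodule.finrank_add_eq_of_isCompl hU
  omega

lemma finrank_ker_le_posDim_sub {s t : BilinForm ℝ W} (ht : t.IsSymm) (hpsd : ∀ v, 0 ≤ t v v)
    (hrad : LinearMap.ker s ⊓ LinearMap.ker t = ⊥) :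
    finrank ℝ (LinearMap.ker s) ≤ posDim (t - s) :=
  le_posDim _ fun x hx hx0 => by
    have hxt : x ∉ LinearMap.ker t := fun hxt => hx0 ((Submodule.eq_bot_iff _).mp hrad x ⟨hx, hxt⟩)
    simpa [LinearMap.mem_ker.mp hx] using apply_self_pos_of_notMem_ker ht hpsd hxt

end

/-- If `s`, `t` are positive semi-definite symmetric bilinear forms on a finite-dimensional
real vector space `W`, with `σ(s) = (0,b,c)`, `σ(t) = (0,c,b)` and `rad(s) ∩ rad(t) = 0`,
then `σ(t - s) = (c,0,b)`. -/
theorem signature_sub_of_semidefinite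
    (W : Type*) [AddCommGroup W] [Module ℝ W] [FiniteDimensional ℝ W]
    (s t : LinearMap.BilinForm ℝ W) (b c : ℕ)
    (hs_symm : s.IsSymm) (ht_symm : t.IsSymm)
    (hs_psd : ∀ v, 0 ≤ s v v) (ht_psd : ∀ v, 0 ≤ t v v)
    (hσs : signature s = (0, b, c)) (hσt : signature t = (0, c, b))
    (hrad : LinearMap.ker s ⊓ LinearMap.ker t = ⊥) :
    signature (t - s) = (c, 0, b) := by
  simp only [signature, Prod.mk.injEq] at hσs hσt ⊢
  obtain ⟨-, hb, hc⟩ := hσs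
  obtain ⟨-, hc', -⟩ := hσt
  have hpos : b ≤ posDim (t - s) := hb ▸ finrank_ker_le_posDim_sub ht_symm ht_psd hrad
  have hneg : c ≤ negDim (t - s) := by
    rw [← posDim_neg, show -(t - s) = s - t from neg_sub t s, ← hc']
    exact finrank_ker_le_posDim_sub hs_symm hs_psd (inf_comm (LinearMap.ker s) _ ▸ hrad)
  have hdim : finrank ℝ W ≤ b + c := hb ▸ hc ▸ finrank_le_finrank_ker_add_posDim hs_symm hs_psd
  have hsum := negDim_add_finrank_ker_add_posDim_le (ht_symm.sub hs_symm)
  omega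
end

section
/- Let G ⊆ GL(n) be a Lie subgroup with Lie algebra g, and μ ∈ Λ²(n*) ⊗ n a point whose orbit G·μ is closed. Then there exists μ̄ ∈ G·μ such that ⟨Ric_{μ̄}, A⟩ = 0 for all A ∈ g, where Ric_{μ̄} is the Ricci endomorphism satisfying ⟨Ric_ν, A⟩ = (1/4)⟨π(A)ν, ν⟩ for all endomorphisms A. -/
/-!
Write `‖ν‖² = ∑ ⟨ν(bᵢ, bⱼ), bₖ⟩²`. In structure constants with respect to `b` this is the
Euclidean norm, and the orbit becomes a closed subset of `ℝ^(ι × ι × ι)`, so `‖·‖²` attains its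
minimum on the orbit at some `μ̄`. For `A ∈ g` the curve `t ↦ exp(tA)·μ̄` stays in the orbit, so
the derivative `2⟨π(A)μ̄, μ̄⟩ = 8⟨Ric_μ̄, A⟩` of `‖exp(tA)·μ̄‖²` at `t = 0` vanishes.
-/

open scoped RealInnerProductSpace
open NormedSpace

noncomputable section

variable {n : Type*} [NormedAddCommGroup n] [InnerProductSpace ℝ n]
variable {ι : Type*} [Fintype ι] (b : OrthonormalBasis ι ℝ n)

/-- The infinitesimal action `π(A)ν`. -/
def infinitesimalAction (A : n →L[ℝ] n) (ν : n → n → n) : n → n → n :=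
  fun x y => A (ν x y) - ν (A x) y - ν x (A y)

def glAct (h : (n →L[ℝ] n)ˣ) (ν : n → n → n) : n → n → n :=
  fun x y => (h : n →L[ℝ] n) (ν (((h⁻¹ : (n →L[ℝ] n)ˣ) : n →L[ℝ] n) x)
    (((h⁻¹ : (n →L[ℝ] n)ˣ) : n →L[ℝ] n) y))

def glOrbit (G : Subgroup (n →L[ℝ] n)ˣ) (μ : n → n → n) : Set (n → n → n) :=
  {ν | ∃ h ∈ G, ν = glAct h μ}

theorem glAct_one (ν : n → n → n) : glAct 1 ν = ν := by
  funext x y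
  simp [glAct]

theorem glAct_mul (u h : (n →L[ℝ] n)ˣ) (ν : n → n → n) :
    glAct (u * h) ν = glAct u (glAct h ν) := by
  funext x y
  simp [glAct]

theorem self_mem_glOrbit (G : Subgroup (n →L[ℝ] n)ˣ) (μ : n → n → n) : μ ∈ glOrbit G μ :=
  ⟨1, G.one_mem, (glAct_one μ).symm⟩

theorem glAct_mem_glOrbit {G : Subgroup (n →L[ℝ] n)ˣ} {μ ν : n → n → n} {u : (n →L[ℝ] n)ˣ}
    (hu : u ∈ G) (hν : ν ∈ glOrbit G μ) : glAct u ν ∈ glOrbit G μ := by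
  obtain ⟨h, hh, rfl⟩ := hν
  exact ⟨u * h, G.mul_mem hu hh, glAct_mul u h μ⟩

theorem glAct_coe_bilinear (h : (n →L[ℝ] n)ˣ) (W : n →L[ℝ] n →L[ℝ] n) :
    glAct h (fun x y => W x y) =
      fun x y => (ContinuousLinearMap.compL ℝ n n n h ∘L
        W.bilinearComp (↑h⁻¹ : n →L[ℝ] n) (↑h⁻¹ : n →L[ℝ] n)) x y := by
  funext x y
  simp [glAct]

theorem exists_bilinear_of_mem_glOrbit {G : Subgroup (n →L[ℝ] n)ˣ} {W : n →L[ℝ] n →L[ℝ] n}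
    {ν : n → n → n} (hν : ν ∈ glOrbit G fun x y => W x y) :
    ∃ W' : n →L[ℝ] n →L[ℝ] n, ν = fun x y => W' x y := by
  obtain ⟨h, -, rfl⟩ := hν
  exact ⟨_, glAct_coe_bilinear h W⟩

def normSq (ν : n → n → n) : ℝ :=
  ∑ i, ∑ j, ∑ k, ⟪ν (b i) (b j), b k⟫ ^ 2

def structConst (ν : n → n → n) : EuclideanSpace ℝ (ι × ι × ι) :=
  WithLp.toLp 2 fun q => ⟪ν (b q.1) (b q.2.1), b q.2.2⟫

def ofStructConst (p : EuclideanSpace ℝ (ι × ι × ι)) : n → n → n :=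
  fun x y => ∑ q, (p q * ⟪x, b q.1⟫ * ⟪y, b q.2.1⟫) • b q.2.2

theorem continuous_structConst : Continuous (structConst b) :=
  (PiLp.continuous_toLp 2 _).comp <| continuous_pi fun q =>
    ((continuous_apply (b q.2.1)).comp (continuous_apply (b q.1))).inner continuous_const

theorem continuous_ofStructConst : Continuous (ofStructConst b) :=
  continuous_pi fun _ => continuous_pi fun _ => continuous_finsetSum _ fun q _ =>
    (((PiLp.continuous_apply 2 _ q).mul continuous_const).mul continuous_const).smul
      continuous_const

theorem norm_structConst_sq (ν : n → n → n) : ‖structConst b ν‖ ^ 2 = normSq b ν := by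
  simp [EuclideanSpace.real_norm_sq_eq, structConst, normSq, Fintype.sum_prod_type]

theorem ofStructConst_structConst (W : n →L[ℝ] n →L[ℝ] n) :
    ofStructConst b (structConst b fun x y => W x y) = fun x y => W x y := by
  funext x y
  conv_rhs => rw [← b.sum_repr' x, ← b.sum_repr' y]
  simp only [ofStructConst, structConst, map_sum, map_smul, FunLike.coe_sum, Finset.sum_apply,
    FunLike.coe_smul, Pi.smul_apply, Fintype.sum_prod_type, Finset.smul_sum]
  conv_rhs => rw [Finset.sum_comm]
  refine Finset.sum_congr rfl fun i _ => Finset.sum_congr rfl fun j _ => ?_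
  conv_rhs => rw [← b.sum_repr' (W (b i) (b j))]
  simp only [Finset.smul_sum, smul_smul]
  refine Finset.sum_congr rfl fun k _ => ?_
  rw [real_inner_comm x, real_inner_comm y, real_inner_comm (b k)]
  congr 1
  ring

/-- `ofStructConst` is a continuous left inverse of `structConst` on bilinear maps. -/
theorem isClosed_image_structConst {S : Set (n → n → n)} (hS : IsClosed S)
    (hbil : ∀ ν ∈ S, ∃ W : n →L[ℝ] n →L[ℝ] n, ν = fun x y => W x y) :
    IsClosed (structConst b '' S) := by
  have hinv : ∀ ν ∈ S, ofStructConst b (structConst b ν) = ν := by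
    intro ν hν
    obtain ⟨W, rfl⟩ := hbil ν hν
    exact ofStructConst_structConst b W
  have himage : structConst b '' S =
      ofStructConst b ⁻¹' S ∩ {p | structConst b (ofStructConst b p) = p} := by
    ext p
    constructor
    · rintro ⟨ν, hν, rfl⟩
      exact ⟨by simpa [hinv ν hν] using hν, by simp [hinv ν hν]⟩
    · rintro ⟨hp, hcp⟩
      exact ⟨_, hp, hcp⟩
  rw [himage]
  exact (hS.preimage (continuous_ofStructConst b)).inter <|
    isClosed_eq ((continuous_structConst b).comp (continuous_ofStructConst b)) continuous_id

theorem exists_isMinOn_normSq {S : Set (n → n → n)} (hS : IsClosed S) (hne : S.Nonempty)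
    (hbil : ∀ ν ∈ S, ∃ W : n →L[ℝ] n →L[ℝ] n, ν = fun x y => W x y) :
    ∃ ν ∈ S, IsMinOn (normSq b) S ν := by
  obtain ⟨_, ⟨ν, hν, rfl⟩, hdist⟩ :=
    (isClosed_image_structConst b hS hbil).exists_infDist_eq_dist (hne.image _) 0
  refine ⟨ν, hν, fun ν' hν' => ?_⟩
  have hle : ‖structConst b ν‖ ≤ ‖structConst b ν'‖ := by
    simpa [hdist] using
      Metric.infDist_le_dist_of_mem (x := 0) (Set.mem_image_of_mem (structConst b) hν')
  simpa [← norm_structConst_sq] using pow_le_pow_left₀ (norm_nonneg _) hle 2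

section Criticality

def expAct (A : n →L[ℝ] n) (ν : n → n → n) : n → n → n :=
  fun x y => exp A (ν (exp (-A) x) (exp (-A) y))

theorem expAct_zero (ν : n → n → n) : expAct 0 ν = ν := by
  funext x y
  simp [expAct]

variable [CompleteSpace n]

theorem glAct_eq_expAct {u : (n →L[ℝ] n)ˣ} {A : n →L[ℝ] n} (hu : (u : n →L[ℝ] n) = exp A)
    (ν : n → n → n) : glAct u ν = expAct A ν := by
  have hinv : ((u⁻¹ : (n →L[ℝ] n)ˣ) : n →L[ℝ] n) = exp (-A) := by
    refine Units.inv_eq_of_mul_eq_one_right ?_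
    rw [hu, ← exp_add_of_commute_of_mem_ball (𝕂 := ℝ) (Commute.neg_right (Commute.refl A))
      ((expSeries_radius_eq_top ℝ (n →L[ℝ] n)).symm ▸ edist_lt_top _ _)
      ((expSeries_radius_eq_top ℝ (n →L[ℝ] n)).symm ▸ edist_lt_top _ _), add_neg_cancel, exp_zero]
  unfold glAct expAct
  rw [hu, hinv]

theorem hasDerivAt_expAct_apply (A : n →L[ℝ] n) (W : n →L[ℝ] n →L[ℝ] n) (x y : n) :
    HasDerivAt (fun t : ℝ => expAct (t • A) (fun x y => W x y) x y)
      (infinitesimalAction A (fun x y => W x y) x y) 0 := by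
  have hexp : HasDerivAt (fun t : ℝ => exp (t • A)) A 0 := by
    simpa using hasDerivAt_exp_smul_const (𝕂 := ℝ) A 0
  have hexp_neg : HasDerivAt (fun t : ℝ => exp (-(t • A))) (-A) 0 := by
    simpa [smul_neg] using hasDerivAt_exp_smul_const (𝕂 := ℝ) (-A) 0
  have hx := hexp_neg.clm_apply (hasDerivAt_const (0 : ℝ) x)
  have hy := hexp_neg.clm_apply (hasDerivAt_const (0 : ℝ) y)
  have h := hexp.clm_apply (((hasDerivAt_const (0 : ℝ) W).clm_apply hx).clm_apply hy)
  refine h.congr_deriv ?_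
  simp [infinitesimalAction, sub_eq_add_neg, add_assoc]

theorem hasDerivAt_normSq_expAct (A : n →L[ℝ] n) (W : n →L[ℝ] n →L[ℝ] n) :
    HasDerivAt (fun t : ℝ => normSq b (expAct (t • A) fun x y => W x y))
      (2 * ∑ i, ∑ j, ∑ k,
        ⟪infinitesimalAction A (fun x y => W x y) (b i) (b j), b k⟫ * ⟪W (b i) (b j), b k⟫) 0 := by
  have hterm : ∀ i j k, HasDerivAt
      (fun t : ℝ => ⟪expAct (t • A) (fun x y => W x y) (b i) (b j), b k⟫ ^ 2)
      (2 * (⟪infinitesimalAction A (fun x y => W x y) (b i) (b j), b k⟫ *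
        ⟪W (b i) (b j), b k⟫)) 0 := by
    intro i j k
    refine (((hasDerivAt_expAct_apply A W (b i) (b j)).inner ℝ
      (hasDerivAt_const (0 : ℝ) (b k))).fun_pow 2).congr_deriv ?_
    simp only [zero_smul, expAct_zero, inner_zero_right, zero_add]
    ring
  unfold normSq
  simp only [Finset.mul_sum]
  exact HasDerivAt.fun_sum fun i _ => HasDerivAt.fun_sum fun j _ =>
    HasDerivAt.fun_sum fun k _ => hterm i j k

theorem sum_inner_infinitesimalAction_eq_zero {S : Set (n → n → n)} (A : n →L[ℝ] n)
    (W : n →L[ℝ] n →L[ℝ] n)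
    (hcurve : ∀ t : ℝ, expAct (t • A) (fun x y => W x y) ∈ S)
    (hmin : IsMinOn (normSq b) S fun x y => W x y) :
    ∑ i, ∑ j, ∑ k,
      ⟪infinitesimalAction A (fun x y => W x y) (b i) (b j), b k⟫ * ⟪W (b i) (b j), b k⟫ = 0 := by
  have hloc : IsLocalMin (fun t : ℝ => normSq b (expAct (t • A) fun x y => W x y)) 0 :=
    Filter.Eventually.of_forall fun t => by simpa [expAct_zero] using hmin (hcurve t)
  simpa using hloc.hasDerivAt_eq_zero (hasDerivAt_normSq_expAct b A W)

end Criticality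

end

theorem closed_orbit_ricci_orthogonal_general
    (n : Type*) [NormedAddCommGroup n] [InnerProductSpace ℝ n] [FiniteDimensional ℝ n]
    (ι : Type*) [Fintype ι] (b : OrthonormalBasis ι ℝ n)
    (μ : n →ₗ[ℝ] n →ₗ[ℝ] n)
    (G : Subgroup ((n →L[ℝ] n)ˣ))
    (hclosed : IsClosed {ν : n → n → n | ∃ h ∈ G,
      ν = fun x y => (h : n →L[ℝ] n) (μ (((h⁻¹ : (n →L[ℝ] n)ˣ) : n →L[ℝ] n) x)
        (((h⁻¹ : (n →L[ℝ] n)ˣ) : n →L[ℝ] n) y))})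
    (g : Set (n →L[ℝ] n))
    (hg : ∀ A ∈ g, ∀ t : ℝ, ∃ u ∈ G, (u : n →L[ℝ] n) = NormedSpace.exp (t • A))
    (Ric : (n → n → n) → (n → n))
    (hRic : ∀ (ν : n → n → n) (A : n →L[ℝ] n),
      ∑ i, ∑ j, ⟪Ric ν (b i), b j⟫ * ⟪A (b i), b j⟫ =
        (1/4) * ∑ i, ∑ j, ∑ k,
          ⟪A (ν (b i) (b j)) - ν (A (b i)) (b j) - ν (b i) (A (b j)), b k⟫ *
            ⟪ν (b i) (b j), b k⟫) :
    ∃ μbar ∈ {ν : n → n → n | ∃ h ∈ G,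
      ν = fun x y => (h : n →L[ℝ] n) (μ (((h⁻¹ : (n →L[ℝ] n)ˣ) : n →L[ℝ] n) x)
        (((h⁻¹ : (n →L[ℝ] n)ˣ) : n →L[ℝ] n) y))},
      ∀ A ∈ g, ∑ i, ∑ j, ⟪Ric μbar (b i), b j⟫ * ⟪A (b i), b j⟫ = 0 := by
  set W₀ : n →L[ℝ] n →L[ℝ] n :=
    LinearMap.toContinuousLinearMap (LinearMap.toContinuousLinearMap.toLinearMap ∘ₗ μ)
  have hW₀ : (fun x y => W₀ x y) = fun x y => μ x y := by
    funext x y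
    simp [W₀]
  change IsClosed (glOrbit G fun x y => μ x y) at hclosed
  change ∃ μbar ∈ glOrbit G (fun x y => μ x y), _
  rw [← hW₀] at hclosed ⊢
  obtain ⟨ν, hν, hmin⟩ := exists_isMinOn_normSq b hclosed ⟨_, self_mem_glOrbit G _⟩
    fun _ hν' => exists_bilinear_of_mem_glOrbit hν'
  refine ⟨ν, hν, fun A hA => ?_⟩
  obtain ⟨W, rfl⟩ := exists_bilinear_of_mem_glOrbit hν
  have hcurve : ∀ t : ℝ, expAct (t • A) (fun x y => W x y) ∈ glOrbit G fun x y => W₀ x y := by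
    intro t
    obtain ⟨u, hu, hexp⟩ := hg A hA t
    exact glAct_eq_expAct hexp _ ▸ glAct_mem_glOrbit hu hν
  have hcrit := sum_inner_infinitesimalAction_eq_zero b A W hcurve hmin
  simp only [infinitesimalAction] at hcrit
  rw [hRic, hcrit, mul_zero]

/-- If `G ⊆ GL(n)` is a Lie subgroup with Lie algebra `g` (i.e. the one-parameter groups
`exp(tA)`, `A ∈ g`, lie in `G`) and the orbit `G·μ` of an antisymmetric bilinear
`μ ∈ Λ²(n*) ⊗ n` is closed, then some `μ̄ ∈ G·μ` satisfies `⟨Ric_μ̄, A⟩ = 0` for all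
`A ∈ g`, where `Ric_ν` is characterised by `⟨Ric_ν, A⟩ = (1/4)⟨π(A)ν, ν⟩` for every
endomorphism `A`. -/
theorem closed_orbit_ricci_orthogonal
    (n : Type*) [NormedAddCommGroup n] [InnerProductSpace ℝ n] [FiniteDimensional ℝ n]
    (ι : Type*) [Fintype ι] (b : OrthonormalBasis ι ℝ n)
    (μ : n →ₗ[ℝ] n →ₗ[ℝ] n) (halt : ∀ x : n, μ x x = 0)
    (G : Subgroup ((n →L[ℝ] n)ˣ))
    (hclosed : IsClosed {ν : n → n → n | ∃ h ∈ G,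
      ν = fun x y => (h : n →L[ℝ] n) (μ (((h⁻¹ : (n →L[ℝ] n)ˣ) : n →L[ℝ] n) x)
        (((h⁻¹ : (n →L[ℝ] n)ˣ) : n →L[ℝ] n) y))})
    (g : Set (n →L[ℝ] n))
    (hg : ∀ A ∈ g, ∀ t : ℝ, ∃ u ∈ G, (u : n →L[ℝ] n) = NormedSpace.exp (t • A))
    (Ric : (n → n → n) → (n → n))
    (hRic : ∀ (ν : n → n → n) (A : n →L[ℝ] n),
      ∑ i, ∑ j, ⟪Ric ν (b i), b j⟫ * ⟪A (b i), b j⟫ =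
        (1/4) * ∑ i, ∑ j, ∑ k,
          ⟪A (ν (b i) (b j)) - ν (A (b i)) (b j) - ν (b i) (A (b j)), b k⟫ *
            ⟪ν (b i) (b j), b k⟫) :
    ∃ μbar ∈ {ν : n → n → n | ∃ h ∈ G,
      ν = fun x y => (h : n →L[ℝ] n) (μ (((h⁻¹ : (n →L[ℝ] n)ˣ) : n →L[ℝ] n) x)
        (((h⁻¹ : (n →L[ℝ] n)ˣ) : n →L[ℝ] n) y))},
      ∀ A ∈ g, ∑ i, ∑ j, ⟪Ric μbar (b i), b j⟫ * ⟪A (b i), b j⟫ = 0 :=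
  closed_orbit_ricci_orthogonal_general n ι b μ G hclosed g hg Ric hRic
end

section
/- Let L be a self-adjoint positive semi-definite linear operator on a finite-dimensional real inner product space P, and let s ⊆ P be a subspace with orthogonal projection pr_s. Then pr_s ∘ L : P → s is surjective if and only if s ∩ ker L = 0. -/
/-!
The adjoint of `pr_s ∘ L : P → s` is `L ∘ ι_s`, because the adjoint of `pr_s` is the inclusion
`ι_s` and `L` is self-adjoint. In finite dimension a map is onto iff its adjoint is injective
(the orthogonal complement of the range is the kernel of the adjoint), and the kernel of
`L ∘ ι_s` is `s ∩ ker L`.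
-/

open LinearMap

theorem LinearMap.surjective_iff_ker_adjoint_eq_bot {𝕜 E F : Type*} [RCLike 𝕜]
    [NormedAddCommGroup E] [InnerProductSpace 𝕜 E] [FiniteDimensional 𝕜 E]
    [NormedAddCommGroup F] [InnerProductSpace 𝕜 F] [FiniteDimensional 𝕜 F] (A : E →ₗ[𝕜] F) :
    Function.Surjective A ↔ ker A.adjoint = ⊥ := by
  rw [← range_eq_top, ← orthogonal_range, Submodule.orthogonal_eq_bot_iff]

theorem LinearMap.IsSymmetric.adjoint_orthogonalProjectionOnto_comp {𝕜 E : Type*} [RCLike 𝕜]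
    [NormedAddCommGroup E] [InnerProductSpace 𝕜 E] [FiniteDimensional 𝕜 E] {T : E →ₗ[𝕜] E}
    (hT : T.IsSymmetric) (s : Submodule 𝕜 E) :
    ((s.orthogonalProjectionOnto : E →L[𝕜] s).toLinearMap ∘ₗ T).adjoint = T ∘ₗ s.subtype := by
  have := FiniteDimensional.complete 𝕜 E
  rw [adjoint_comp, hT.adjoint_eq, ContinuousLinearMap.adjoint_toLinearMap,
    Submodule.adjoint_orthogonalProjectionOnto]
  rfl

theorem proj_comp_surjective_iff_general
    (P : Type*) [NormedAddCommGroup P] [InnerProductSpace ℝ P] [FiniteDimensional ℝ P]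
    (L : P →ₗ[ℝ] P)
    (hsa : ∀ x y : P, inner ℝ (L x) y = (inner ℝ x (L y) : ℝ))
    (s : Submodule ℝ P) :
    Function.Surjective (fun x : P => s.orthogonalProjection (L x)) ↔
      s ⊓ LinearMap.ker L = ⊥ := by
  change Function.Surjective ((s.orthogonalProjectionOnto : P →L[ℝ] s).toLinearMap ∘ₗ L) ↔ _
  rw [surjective_iff_ker_adjoint_eq_bot, IsSymmetric.adjoint_orthogonalProjectionOnto_comp hsa,
    ker_comp, ← Submodule.disjoint_iff_comap_eq_bot, disjoint_iff]

/-- For a self-adjoint positive semi-definite operator `L` on a finite-dimensional real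
inner product space `P` and a subspace `s ⊆ P`, the composition `pr_s ∘ L` is surjective
onto `s` if and only if `s ∩ ker L = 0`. -/
theorem proj_comp_surjective_iff
    (P : Type*) [NormedAddCommGroup P] [InnerProductSpace ℝ P] [FiniteDimensional ℝ P]
    (L : P →ₗ[ℝ] P)
    (hsa : ∀ x y : P, inner ℝ (L x) y = (inner ℝ x (L y) : ℝ))
    (hpsd : ∀ x : P, (0 : ℝ) ≤ inner ℝ (L x) x)
    (s : Submodule ℝ P) :
    Function.Surjective (fun x : P => s.orthogonalProjection (L x)) ↔
      s ⊓ LinearMap.ker L = ⊥ :=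
  proj_comp_surjective_iff_general P L hsa s
end
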